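/- Assume E = K or F, and that IC^mix_s ≅ E^mix_s for all s ∈ S. Then the category P^mix_S(X,E) is Koszul, i.e. Ext^k(IC^mix_s, IC^mix_t⟨n⟩) = 0 unless n = −k; in particular P^mix_S(X,E) is positively graded. -/

import Mathlib

/-!
Setting of Achar–Riche, "Modular perverse sheaves on flag varieties II", §§3–4:
`X` is a complex variety with a finite stratification `S` by affine spaces satisfying
assumptions (A1) and (A2) of [AR1]; `D` stands for the mixed derived category
`D^mix_S(X,E) = K^b Parity_S(X,E)`, with cohomological shift `⟦n⟧`, internal shift
`Br n = {n}`, Tate twist `Tw n = ⟨n⟩ = {−n}[n]`, standard objects `Dm s = Δ^mix_s`,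
costandard objects `Nm s = ∇^mix_s`, and indecomposable parity objects `Par s = E^mix_s`.
-/

open CategoryTheory CategoryTheory.Limits CategoryTheory.Pretriangulated

attribute [local instance] CategoryTheory.Limits.HasFiniteBiproducts.of_hasFiniteProducts

universe w v u

/-- `M` lies in the triangulated subcategory generated by the objects satisfying `G`. -/
def TriangGenBy {D : Type u} [Category.{v} D] [HasShift D ℤ] [Preadditive D] [HasZeroObject D]
    [∀ n : ℤ, (shiftFunctor D n).Additive] [Pretriangulated D]
    (G : D → Prop) (M : D) : Prop :=
  ∀ P : D → Prop, (∀ X, IsZero X → P X) → (∀ X Y, Nonempty (X ≅ Y) → P X → P Y) →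
    (∀ (X : D) (n : ℤ), P X → P (X⟦n⟧)) →
    (∀ T ∈ distTriang D, P T.obj₁ → P T.obj₃ → P T.obj₂) →
    (∀ X, G X → P X) → P M

namespace CategoryTheory

variable {D : Type u} [Category.{v} D]

def shiftObjIsoOfIsoCompShift [HasShift D ℤ] {F G : D ⥤ D} {n : ℤ}
    (e : G ≅ F ⋙ shiftFunctor D n) (k : ℤ) {X Y : D} (i : X ≅ Y) :
    (G.obj X)⟦k⟧ ≅ (F.obj Y)⟦n + k⟧ :=
  (shiftFunctor D k).mapIso (e.app X ≪≫ (shiftFunctor D n).mapIso (F.mapIso i)) ≪≫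
    (shiftFunctorAdd D n k).symm.app _

lemma eq_zero_of_iso_of_forall_eq_zero [Preadditive D] {X X' Y Y' : D}
    (i : X ≅ X') (j : Y ≅ Y') (h : ∀ g : X' ⟶ Y', g = 0) (f : X ⟶ Y) : f = 0 := by
  have hf : i.inv ≫ f ≫ j.hom = 0 := h _
  rwa [Preadditive.IsIso.comp_left_eq_zero, Preadditive.IsIso.comp_right_eq_zero] at hf

end CategoryTheory

/-- Corollary 3.18 of the paper.  Assume `E = K` or `F` and that
`IC^mix_s ≅ E^mix_s` for all `s ∈ S`.  Then the category `P^mix_S(X,E)` is Koszul: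
`Ext^k(IC^mix_s, IC^mix_t⟨n⟩) = 0` unless `n = −k`; in particular it is positively graded.
(Since `D^mix_S(X,E) ≅ D^b P^mix_S(X,E)`, the `Ext`-groups of the heart are computed as
`Hom`-groups in the mixed derived category, and positive grading is expressed by the
`Ext¹`-criterion of Proposition 2.4(4).) -/
theorem koszulity_from_parity_simples
    {S : Type u} [Fintype S]
    (D : Type u) [Category.{v} D] [Preadditive D] [HasZeroObject D] [HasShift D ℤ]
    [∀ n : ℤ, (shiftFunctor D n).Additive] [Pretriangulated D]
    -- internal shift `{m}`, Tate twist `⟨n⟩`, simple and parity objects: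
    (Br : ℤ → D ⥤ D) (Tw : ℤ → D ⥤ D) (IC Par : S → D)
    -- `⟨n⟩ = {−n}[n]`:
    (htw : ∀ n : ℤ, Nonempty (Tw n ≅ Br (-n) ⋙ shiftFunctor D n))
    -- `Hom`-vanishing between parity objects in `K^b Parity_S(X,E)` in nonzero degrees:
    (hpar : ∀ (s t : S) (m j : ℤ), j ≠ 0 →
      ∀ f : Par s ⟶ ((Br m).obj (Par t))⟦j⟧, f = 0)
    -- the hypothesis `IC^mix_s ≅ E^mix_s`:
    (hIC : ∀ s : S, Nonempty (IC s ≅ Par s)) :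
    (∀ (s t : S) (kk : ℕ) (n : ℤ), n ≠ -(kk : ℤ) →
      ∀ f : IC s ⟶ ((Tw n).obj (IC t))⟦(kk : ℤ)⟧, f = 0) ∧
    (∀ (s t : S) (n : ℤ), 0 < n →
      ∀ f : IC s ⟶ ((Tw n).obj (IC t))⟦(1 : ℤ)⟧, f = 0) := by
  have koszul : ∀ (s t : S) (k n : ℤ), n ≠ -k →
      ∀ f : IC s ⟶ ((Tw n).obj (IC t))⟦k⟧, f = 0 := fun s t k n hn =>
    eq_zero_of_iso_of_forall_eq_zero (hIC s).some
      (shiftObjIsoOfIsoCompShift (htw n).some k (hIC t).some)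
      (hpar s t (-n) (n + k) (by omega))
  exact ⟨fun s t k => koszul s t k, fun s t n hn => koszul s t 1 n (by omega)⟩
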